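/- Special case of the Saito-Shintani lemma: for a finite-dimensional vector space V over a field, an endomorphism T of V, and the cyclic permutation τ on V^{⊗r}, we have Tr(T^r, V) = Tr((T ⊗ T ⊗ ... ⊗ T) ∘ τ, V^{⊗r}). -/

import Mathlib

/-!
In a basis `b` of `V`, `Tr(T^r)` is the sum over closed paths `F : Fin r → ι` of the products
`∏ᵢ T_{F i, F (i + 1)}` of matrix entries. In the product basis of `V^{⊗r}`, the diagonal entry of
`(T ⊗ ⋯ ⊗ T) ∘ τ` at the multi-index `F` is `∏ᵢ T_{F (i + 1), F i}`, the same product for the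
transposed matrix; summing over `F` gives `Tr((Tᵀ)^r) = Tr(T^r)`.
-/

open scoped TensorProduct

namespace Matrix

variable {ι R : Type*} [Fintype ι] [DecidableEq ι] [CommSemiring R]

theorem pow_succ_apply_eq_sum_prod (M : Matrix ι ι R) (n : ℕ) (a c : ι) :
    (M ^ (n + 1)) a c =
      ∑ f : Fin n → ι,
        ∏ i, M (Fin.cons (α := fun _ => ι) a f i) (Fin.snoc (α := fun _ => ι) f c i) := by
  induction n generalizing a with
  | zero => simp; rfl
  | succ n ih =>
    rw [pow_succ', mul_apply, ← (Fin.consEquiv fun _ => ι).sum_comp, Fintype.sum_prod_type]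
    refine Finset.sum_congr rfl fun d _ => ?_
    rw [ih, Finset.mul_sum]
    refine Finset.sum_congr rfl fun f _ => ?_
    dsimp only [Fin.consEquiv, Equiv.coe_fn_mk]
    rw [Fin.prod_univ_succ (n := n + 1), ← Fin.cons_snoc_eq_snoc_cons]
    simp only [Fin.cons_zero, Fin.cons_succ]

theorem trace_pow_succ_eq_sum_prod_finRotate (M : Matrix ι ι R) (n : ℕ) :
    trace (M ^ (n + 1)) = ∑ F : Fin (n + 1) → ι, ∏ i, M (F i) (F (finRotate _ i)) := by
  simp only [trace, diag, pow_succ_apply_eq_sum_prod, Fin.snoc_eq_cons_rotate]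
  rw [← (Fin.consEquiv fun _ => ι).sum_comp, Fintype.sum_prod_type]
  rfl

end Matrix

open PiTensorProduct in
theorem LinearMap.trace_map_comp_reindex_eq_sum_prod {R V ι κ : Type*} [CommRing R]
    [AddCommGroup V] [Module R V] [Fintype ι] [DecidableEq ι] [Fintype κ] [DecidableEq κ]
    (b : Module.Basis κ R V) (σ : Equiv.Perm ι) (T : V →ₗ[R] V) :
    trace R _ (map (fun _ => T) ∘ₗ (reindex R (fun _ => V) σ).toLinearMap) =
      ∑ F : ι → κ, ∏ i, toMatrix b b T (F (σ i)) (F i) := by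
  let B := Basis.piTensorProduct fun _ : ι => b
  rw [trace_eq_matrix_trace R B, Matrix.trace]
  refine Finset.sum_congr rfl fun F _ => ?_
  rw [Matrix.diag_apply, toMatrix_apply, Basis.piTensorProduct_apply, comp_apply,
    LinearEquiv.coe_coe, reindex_tprod, map_tprod, Basis.piTensorProduct_repr_tprod_apply,
    ← Equiv.prod_comp σ]
  simp [toMatrix_apply]

/-- Special case of the Saito–Shintani lemma:
`Tr(T^r, V) = Tr((T ⊗ ⋯ ⊗ T) ∘ τ, V^{⊗r})` for the cyclic shift `τ`. -/
theorem saito_shintani_special {k V : Type*} [Field k] [AddCommGroup V] [Module k V]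
    [FiniteDimensional k V] {r : ℕ} (hr : 1 ≤ r)
    (τ : (⨂[k] (_ : Fin r), V) →ₗ[k] (⨂[k] (_ : Fin r), V))
    (hτ : ∀ v : Fin r → V,
      τ (PiTensorProduct.tprod k v) =
        PiTensorProduct.tprod k (fun i => v ((finRotate r).symm i)))
    (T : V →ₗ[k] V) :
    LinearMap.trace k V (T ^ r)
      = LinearMap.trace k (⨂[k] (_ : Fin r), V)
          ((PiTensorProduct.map (fun _ : Fin r => T)) ∘ₗ τ) := by
  obtain ⟨n, rfl⟩ : ∃ n, r = n + 1 := ⟨r - 1, by omega⟩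
  have hτ_reindex :
      τ = (PiTensorProduct.reindex k (fun _ => V) (finRotate (n + 1))).toLinearMap :=
    PiTensorProduct.ext <| MultilinearMap.ext fun v => by
      simp only [LinearMap.compMultilinearMap_apply, hτ, LinearEquiv.coe_coe,
        PiTensorProduct.reindex_tprod]
  let b := Module.finBasis k V
  rw [hτ_reindex, LinearMap.trace_map_comp_reindex_eq_sum_prod b,
    LinearMap.trace_eq_matrix_trace k b, ← LinearMap.toMatrix_pow, ← Matrix.trace_transpose,
    Matrix.transpose_pow, Matrix.trace_pow_succ_eq_sum_prod_finRotate]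
  rfl
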